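/- arXiv:2306.09976 — 2 statements merged into one kernel-verified Lean document; each statement's English description precedes it below -/
import Mathlib

section
/- Let e_1, ..., e_n be nonnegative random variables with Σ_{j ∈ N} E[e_j] ≤ n for a null set N. For any self-consistent rejection set R (every rejected e_j satisfies e_j ≥ n/(α|R|)), the realized false discovery proportion satisfies the pointwise bound FDP = |R ∩ N|/max(|R|,1) ≤ (α/n) Σ_{j ∈ N} e_j. -/
/-!
Every rejected null hypothesis has e-value at least `n / (α |R|)`, so the null e-values sum to at
least `|R ∩ N| · n / (α |R|)`; multiplying by `α / n` leaves exactly the FDP `|R ∩ N| / |R|`.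
-/

open MeasureTheory ENNReal Finset

theorem card_inter_nsmul_le_sum {ι M : Type*} [DecidableEq ι] [AddCommMonoid M] [PartialOrder M]
    [IsOrderedAddMonoid M] [CanonicallyOrderedAdd M] {R : Finset ι} (N : Finset ι)
    {f : ι → M} {c : M} (h : ∀ j ∈ R, c ≤ f j) :
    #(R ∩ N) • c ≤ ∑ j ∈ N, f j :=
  calc #(R ∩ N) • c ≤ ∑ j ∈ R ∩ N, f j :=
        card_nsmul_le_sum _ _ _ fun j hj ↦ h j (mem_inter.1 hj).1
    _ ≤ ∑ j ∈ N, f j := sum_le_sum_of_subset inter_subset_right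

theorem ENNReal.div_mul_div_mul_cancel {a b : ℝ≥0∞} (ha₀ : a ≠ 0) (ha : a ≠ ∞)
    (hb₀ : b ≠ 0) (hb : b ≠ ∞) (c : ℝ≥0∞) : a / b * (b / (a * c)) = c⁻¹ := by
  rw [div_eq_mul_inv, div_eq_mul_inv, ENNReal.mul_inv (.inl ha₀) (.inl ha)]
  calc a * b⁻¹ * (b * (a⁻¹ * c⁻¹)) = (a * a⁻¹) * (b * b⁻¹) * c⁻¹ := by ring
    _ = c⁻¹ := by rw [ENNReal.mul_inv_cancel ha₀ ha, ENNReal.mul_inv_cancel hb₀ hb, one_mul, one_mul]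

theorem selfConsistent_pointwise_FDP_bound_general {Ω : Type*}
    (n : ℕ) (e : Fin n → Ω → ℝ≥0∞) (N : Finset (Fin n))
    (α : ℝ≥0∞) (hα0 : 0 < α) (hα1 : α < 1)
    (R : Ω → Finset (Fin n))
    (hsc : ∀ ω, ∀ j ∈ R ω, (n : ℝ≥0∞) / (α * ((R ω).card : ℝ≥0∞)) ≤ e j ω) :
    ∀ ω, ((R ω ∩ N).card : ℝ≥0∞) / (max ((R ω).card : ℝ≥0∞) 1)
      ≤ (α / (n : ℝ≥0∞)) * ∑ j ∈ N, e j ω := by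
  intro ω
  rcases (R ω).eq_empty_or_nonempty with hR | hR
  · simp [hR]
  have hn : (n : ℝ≥0∞) ≠ 0 := by exact_mod_cast (Fin.pos hR.choose).ne'
  rw [max_eq_left (by exact_mod_cast hR.card_pos)]
  calc ((R ω ∩ N).card : ℝ≥0∞) / (R ω).card
      = α / n * (#(R ω ∩ N) • ((n : ℝ≥0∞) / (α * (R ω).card))) := by
        rw [nsmul_eq_mul, mul_left_comm,
          ENNReal.div_mul_div_mul_cancel hα0.ne' (hα1.trans_le le_top).ne hn (natCast_ne_top n),
          div_eq_mul_inv]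
    _ ≤ α / n * ∑ j ∈ N, e j ω := by gcongr; exact card_inter_nsmul_le_sum N (hsc ω)

/-- Pointwise FDP bound: for a self-consistent rejection set built from relaxed e-values,
the realized false discovery proportion is bounded by `(α/n) Σ_{j ∈ N} e_j`
for every realization. -/
theorem selfConsistent_pointwise_FDP_bound {Ω : Type*} [MeasurableSpace Ω]
    (μ : Measure Ω) [IsProbabilityMeasure μ]
    (n : ℕ) (e : Fin n → Ω → ℝ≥0∞) (N : Finset (Fin n))
    (hrelaxed : ∑ j ∈ N, ∫⁻ ω, e j ω ∂μ ≤ (n : ℝ≥0∞))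
    (α : ℝ≥0∞) (hα0 : 0 < α) (hα1 : α < 1)
    (R : Ω → Finset (Fin n))
    (hsc : ∀ ω, ∀ j ∈ R ω, (n : ℝ≥0∞) / (α * ((R ω).card : ℝ≥0∞)) ≤ e j ω) :
    ∀ ω, ((R ω ∩ N).card : ℝ≥0∞) / (max ((R ω).card : ℝ≥0∞) 1)
      ≤ (α / (n : ℝ≥0∞)) * ∑ j ∈ N, e j ω :=
  selfConsistent_pointwise_FDP_bound_general n e N α hα0 hα1 R hsc
end

section
/- In the e-filter, fix levels α_1,...,α_M ∈ [0,1] and e-values e ∈ [0,∞]^n. Define the feasible threshold set T̂ = {(t_1,...,t_M) : t_m · max(|R_m(t)|, 1) ≥ |A^m|/α_m for all m}, where R_m(t) is the set of groups at layer m intersecting the joint rejection set R(t) = {i : Mean(e over group of i at layer m) ≥ t_m for all m}. Let t̂_m be the minimum m-th coordinate over T̂. Then (t̂_1,...,t̂_M) ∈ T̂. -/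
/-! Lowering thresholds only enlarges the rejection sets, so `|R_m(t)|` is antitone in `t`.
Hence, with `K = max |R_m(t̂)| 1` evaluated at the componentwise infimum `t̂`, every feasible `t`
satisfies `|A^m| / α_m ≤ t_m * K`; since `K` is finite and nonzero, this passes to the infimum
over `t_m`. -/

open ENNReal Finset

section eFilter

variable {n M : ℕ}

/-- Group average of e-values over the group of hypothesis `i` at layer `m`, where
`part m i` is the group of `i` in the partition at layer `m`. -/
noncomputable def groupMean (part : Fin M → Fin n → Finset (Fin n))
    (e : Fin n → ℝ≥0∞) (m : Fin M) (i : Fin n) : ℝ≥0∞ :=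
  (∑ j ∈ part m i, e j) / ((part m i).card : ℝ≥0∞)

/-- Joint rejection set of the e-filter at thresholds `t`. -/
noncomputable def jointRejections (part : Fin M → Fin n → Finset (Fin n))
    (e : Fin n → ℝ≥0∞) (t : Fin M → ℝ≥0∞) : Finset (Fin n) :=
  Finset.univ.filter (fun i => ∀ m, t m ≤ groupMean part e m i)

/-- Groups at layer `m` that intersect the joint rejection set. -/
noncomputable def layerRejections (part : Fin M → Fin n → Finset (Fin n))
    (e : Fin n → ℝ≥0∞) (t : Fin M → ℝ≥0∞) (m : Fin M) : Finset (Finset (Fin n)) :=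
  (jointRejections part e t).image (part m)

/-- The set of feasible threshold vectors of the e-filter. -/
noncomputable def feasibleThresholds (part : Fin M → Fin n → Finset (Fin n))
    (e : Fin n → ℝ≥0∞) (α : Fin M → ℝ≥0∞) : Set (Fin M → ℝ≥0∞) :=
  {t | ∀ m : Fin M,
    ((Finset.univ.image (part m)).card : ℝ≥0∞) / α m
      ≤ t m * max ((layerRejections part e t m).card : ℝ≥0∞) 1}

end eFilter

theorem ENNReal.le_sInf_mul {s : Set ℝ≥0∞} {a b : ℝ≥0∞} (hb₀ : b ≠ 0) (hb : b ≠ ∞)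
    (h : ∀ x ∈ s, a ≤ x * b) : a ≤ sInf s * b :=
  (ENNReal.div_le_iff hb₀ hb).1 <| le_sInf fun x hx => (ENNReal.div_le_iff hb₀ hb).2 (h x hx)

section eFilter

variable {n M : ℕ} (part : Fin M → Fin n → Finset (Fin n)) (e : Fin n → ℝ≥0∞)

theorem jointRejections_antitone : Antitone (jointRejections part e) := fun _ _ hst _ hi => by
  simp only [jointRejections, Finset.mem_filter, Finset.mem_univ, true_and] at hi ⊢
  exact fun m => (hst m).trans (hi m)

theorem card_layerRejections_antitone (m : Fin M) :
    Antitone fun t => (layerRejections part e t m).card := fun _ _ hst =>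
  Finset.card_le_card (Finset.image_subset_image (jointRejections_antitone part e hst))

end eFilter

theorem eFilter_componentwise_min_feasible_general {n M : ℕ}
    (part : Fin M → Fin n → Finset (Fin n))
    (e : Fin n → ℝ≥0∞)
    (α : Fin M → ℝ≥0∞) :
    (fun m => sInf ((fun t => t m) '' feasibleThresholds part e α))
      ∈ feasibleThresholds part e α := by
  set F := feasibleThresholds part e α
  set tMin : Fin M → ℝ≥0∞ := fun m => sInf ((fun t => t m) '' F)
  have tMin_le : ∀ t ∈ F, tMin ≤ t := fun t ht m => sInf_le ⟨t, ht, rfl⟩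
  intro m
  set K : ℝ≥0∞ := max ((layerRejections part e tMin m).card : ℝ≥0∞) 1
  have hK₀ : K ≠ 0 := (zero_lt_one.trans_le (le_max_right _ _)).ne'
  have hK : K ≠ ∞ := max_ne_top (natCast_ne_top _) one_ne_top
  refine ENNReal.le_sInf_mul hK₀ hK ?_
  rintro _ ⟨t, ht, rfl⟩
  have hcard := card_layerRejections_antitone part e m (tMin_le t ht)
  exact (ht m).trans (mul_le_mul_right (max_le_max_right 1 (Nat.cast_le.2 hcard)) _)

/-- Theorem S.1 (e-filter): the componentwise minima of the feasible threshold set are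
themselves feasible. -/
theorem eFilter_componentwise_min_feasible {n M : ℕ}
    (part : Fin M → Fin n → Finset (Fin n))
    (hpart_mem : ∀ m i, i ∈ part m i)
    (hpart_eq : ∀ m i j, j ∈ part m i → part m j = part m i)
    (e : Fin n → ℝ≥0∞)
    (α : Fin M → ℝ≥0∞) (hα : ∀ m, α m ≤ 1) :
    (fun m => sInf ((fun t => t m) '' feasibleThresholds part e α))
      ∈ feasibleThresholds part e α :=
  eFilter_componentwise_min_feasible_general part e α
end
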